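/- The LSE upper bound on softmax is tighter than the ER upper bound: for all x̃ with l̃ ≤ x̃ ≤ ũ (and l̃₁ = ũ₁ = x̃₁ = 0, S(l̃) < S(ũ)), p̄₁ · (lse(ũ) − lse(x̃))/(lse(ũ) − lse(l̃)) + p̲₁ · (lse(x̃) − lse(l̃))/(lse(ũ) − lse(l̃)) ≤ p̄₁ · (S(ũ) − S(x̃))/(S(ũ) − S(l̃)) + p̲₁ · (S(x̃) − S(l̃))/(S(ũ) − S(l̃)). -/

import Mathlib

/-!
Write `A = S(l̃) ≤ B = S(x̃) ≤ C = S(ũ)`. Both sides interpolate between `p̄₁ = 1/A` and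
`p̲₁ = 1/C ≤ p̄₁`, with coefficient `t = (B - A)/(C - A)` on the right and
`s = (log B - log A)/(log C - log A)` on the left. Since `B = (1 - t) A + t C`, concavity of `log`
gives `log B ≥ (1 - t) log A + t log C`, i.e. `t ≤ s`, so the left side puts more weight on the
smaller endpoint.
-/

open Real Finset

theorem sub_div_sub_le_log_sub_div_log_sub {a b c : ℝ} (ha : 0 < a) (hab : a ≤ b) (hbc : b ≤ c)
    (hac : a < c) : (b - a) / (c - a) ≤ (log b - log a) / (log c - log a) := by
  set t := (b - a) / (c - a)
  have ht0 : 0 ≤ t := div_nonneg (sub_nonneg.mpr hab) (sub_nonneg.mpr hac.le)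
  have ht1 : t ≤ 1 := (div_le_one (sub_pos.mpr hac)).mpr (by linarith)
  have hb : (1 - t) • a + t • c = b := by
    simp only [smul_eq_mul, t]
    field_simp [(sub_pos.mpr hac).ne']
    ring
  have hlog : (1 - t) • log a + t • log c ≤ log b :=
    hb ▸ strictConcaveOn_log_Ioi.concaveOn.2 (Set.mem_Ioi.mpr ha)
      (Set.mem_Ioi.mpr (ha.trans hac)) (by linarith) ht0 (by ring)
  rw [le_div_iff₀ (sub_pos.mpr (log_lt_log ha hac))]
  simp only [smul_eq_mul] at hlog
  linarith

theorem mul_sub_div_add_mul_sub_div {a b c : ℝ} (hac : a ≠ c) (p q : ℝ) :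
    p * ((c - b) / (c - a)) + q * ((b - a) / (c - a)) = p - (p - q) * ((b - a) / (c - a)) := by
  field_simp [sub_ne_zero.mpr hac.symm]
  ring

theorem log_interpolation_le_interpolation {a b c p q : ℝ} (ha : 0 < a) (hab : a ≤ b)
    (hbc : b ≤ c) (hac : a < c) (hqp : q ≤ p) :
    p * ((log c - log b) / (log c - log a)) + q * ((log b - log a) / (log c - log a)) ≤
      p * ((c - b) / (c - a)) + q * ((b - a) / (c - a)) := by
  rw [mul_sub_div_add_mul_sub_div (log_lt_log ha hac).ne, mul_sub_div_add_mul_sub_div hac.ne]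
  gcongr p - ?_
  exact mul_le_mul_of_nonneg_left (sub_div_sub_le_log_sub_div_log_sub ha hab hbc hac)
    (sub_nonneg.mpr hqp)

theorem LSE_upper_tighter_than_ER_general (K : ℕ) (lt x ut : Fin K → ℝ)
    (hl : ∀ j, lt j ≤ x j) (hu : ∀ j, x j ≤ ut j)
    (hS : (∑ j, Real.exp (lt j)) < ∑ j, Real.exp (ut j)) :
    (1 / ∑ j, Real.exp (lt j)) *
        ((Real.log (∑ j, Real.exp (ut j)) - Real.log (∑ j, Real.exp (x j))) /
          (Real.log (∑ j, Real.exp (ut j)) - Real.log (∑ j, Real.exp (lt j)))) +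
      (1 / ∑ j, Real.exp (ut j)) *
        ((Real.log (∑ j, Real.exp (x j)) - Real.log (∑ j, Real.exp (lt j))) /
          (Real.log (∑ j, Real.exp (ut j)) - Real.log (∑ j, Real.exp (lt j)))) ≤
    (1 / ∑ j, Real.exp (lt j)) *
        (((∑ j, Real.exp (ut j)) - ∑ j, Real.exp (x j)) /
          ((∑ j, Real.exp (ut j)) - ∑ j, Real.exp (lt j))) +
      (1 / ∑ j, Real.exp (ut j)) *
        (((∑ j, Real.exp (x j)) - ∑ j, Real.exp (lt j)) /
          ((∑ j, Real.exp (ut j)) - ∑ j, Real.exp (lt j))) := by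
  have hne : (univ : Finset (Fin K)).Nonempty := by
    by_contra h
    simp [not_nonempty_iff_eq_empty.mp h] at hS
  have hpos : 0 < ∑ j, exp (lt j) := sum_pos (fun j _ => exp_pos _) hne
  exact log_interpolation_le_interpolation hpos
    (sum_le_sum fun j _ => exp_le_exp.mpr (hl j)) (sum_le_sum fun j _ => exp_le_exp.mpr (hu j))
    hS (one_div_le_one_div_of_le hpos hS.le)

theorem LSE_upper_tighter_than_ER (K : ℕ) (hK : 0 < K) (lt x ut : Fin K → ℝ)
    (hl : ∀ j, lt j ≤ x j) (hu : ∀ j, x j ≤ ut j)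
    (hl1 : lt ⟨0, hK⟩ = 0) (hx1 : x ⟨0, hK⟩ = 0) (hu1 : ut ⟨0, hK⟩ = 0)
    (hS : (∑ j, Real.exp (lt j)) < ∑ j, Real.exp (ut j)) :
    (1 / ∑ j, Real.exp (lt j)) *
        ((Real.log (∑ j, Real.exp (ut j)) - Real.log (∑ j, Real.exp (x j))) /
          (Real.log (∑ j, Real.exp (ut j)) - Real.log (∑ j, Real.exp (lt j)))) +
      (1 / ∑ j, Real.exp (ut j)) *
        ((Real.log (∑ j, Real.exp (x j)) - Real.log (∑ j, Real.exp (lt j))) /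
          (Real.log (∑ j, Real.exp (ut j)) - Real.log (∑ j, Real.exp (lt j)))) ≤
    (1 / ∑ j, Real.exp (lt j)) *
        (((∑ j, Real.exp (ut j)) - ∑ j, Real.exp (x j)) /
          ((∑ j, Real.exp (ut j)) - ∑ j, Real.exp (lt j))) +
      (1 / ∑ j, Real.exp (ut j)) *
        (((∑ j, Real.exp (x j)) - ∑ j, Real.exp (lt j)) /
          ((∑ j, Real.exp (ut j)) - ∑ j, Real.exp (lt j))) :=
  LSE_upper_tighter_than_ER_general K lt x ut hl hu hS
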